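/- Let S be a right Mori order in a simple Artinian ring Q and I a right divisorial right ideal of S. Then I is a finite intersection of ν-irreducible right divisorial right ideals of S, and each ν-irreducible right divisorial right ideal of S that properly admits a cover has the form aS :_r b = {s in S : bs in aS} for some regular elements a, b in S. -/

import Mathlib

/-! Basic notions for orders in a simple Artinian ring, following Halimi,
"Right Mori orders". Throughout, `Q` is a ring and `S` a subring of `Q`. -/

section Preamble

variable {Q : Type*} [Ring Q]

/-- `a` is a regular element of the subring `S` of `Q`, i.e. `a ∈ S` and `a` is
neither a left nor a right zero divisor in `S`. -/
def IsRegularElemIn (S : Subring Q) (a : Q) : Prop :=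
  a ∈ S ∧ (∀ b ∈ S, a * b = 0 → b = 0) ∧ (∀ b ∈ S, b * a = 0 → b = 0)

/-- `S` is an order in `Q`: every regular element of `S` is a unit of `Q` and every
element of `Q` is both a left fraction and a right fraction over `S`. -/
def IsOrderIn (S : Subring Q) : Prop :=
  (∀ a : Q, IsRegularElemIn S a → IsUnit a) ∧
  (∀ q : Q, ∃ a b : Q, a ∈ S ∧ IsRegularElemIn S b ∧ b * q = a) ∧
  (∀ q : Q, ∃ a b : Q, a ∈ S ∧ IsRegularElemIn S b ∧ q * b = a)

/-- A subset of `Q` that is a right `S`-submodule of `Q`. -/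
def IsRightModSet (S : Subring Q) (I : Set Q) : Prop :=
  (0 : Q) ∈ I ∧ (∀ x ∈ I, ∀ y ∈ I, x + y ∈ I) ∧ (∀ x ∈ I, -x ∈ I) ∧
    ∀ x ∈ I, ∀ s ∈ S, x * s ∈ I

/-- A subset of `Q` that is a left `S`-submodule of `Q`. -/
def IsLeftModSet (S : Subring Q) (I : Set Q) : Prop :=
  (0 : Q) ∈ I ∧ (∀ x ∈ I, ∀ y ∈ I, x + y ∈ I) ∧ (∀ x ∈ I, -x ∈ I) ∧
    ∀ x ∈ I, ∀ s ∈ S, s * x ∈ I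

/-- A (integral) right ideal of `S`, viewed as a subset of `Q`. -/
def IsRightIdealSet (S : Subring Q) (I : Set Q) : Prop :=
  IsRightModSet S I ∧ I ⊆ (S : Set Q)

/-- A (integral) left ideal of `S`, viewed as a subset of `Q`. -/
def IsLeftIdealSet (S : Subring Q) (I : Set Q) : Prop :=
  IsLeftModSet S I ∧ I ⊆ (S : Set Q)

/-- `(A : B)_r = {q ∈ Q : B q ⊆ A}`. -/
def colonR (A B : Set Q) : Set Q := {q : Q | ∀ b ∈ B, b * q ∈ A}

/-- `(A : B)_l = {q ∈ Q : q B ⊆ A}`. -/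
def colonL (A B : Set Q) : Set Q := {q : Q | ∀ b ∈ B, q * b ∈ A}

/-- `I^ν = (S : (S : I)_l)_r`. -/
def nuR (S : Subring Q) (I : Set Q) : Set Q := colonR (S : Set Q) (colonL (S : Set Q) I)

/-- `^ν I = (S : (S : I)_r)_l`. -/
def nuL (S : Subring Q) (I : Set Q) : Set Q := colonL (S : Set Q) (colonR (S : Set Q) I)

/-- A (fractional) right `S`-ideal: a right `S`-submodule of `Q` containing a regular
element of `S` and with `uI ⊆ S` for some unit `u` of `Q`. -/
def IsRightSIdeal (S : Subring Q) (I : Set Q) : Prop :=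
  IsRightModSet S I ∧ (∃ a ∈ I, IsRegularElemIn S a) ∧
    ∃ u : Qˣ, ∀ x ∈ I, (u : Q) * x ∈ S

/-- A (fractional) left `S`-ideal. -/
def IsLeftSIdeal (S : Subring Q) (I : Set Q) : Prop :=
  IsLeftModSet S I ∧ (∃ a ∈ I, IsRegularElemIn S a) ∧
    ∃ u : Qˣ, ∀ x ∈ I, x * (u : Q) ∈ S

/-- A completely prime right ideal of `S`: a proper right ideal `P` such that for all
`a, b ∈ S`, `aP ⊆ P` and `ab ∈ P` imply `a ∈ P` or `b ∈ P`. -/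
def IsCompletelyPrimeRightIdeal (S : Subring Q) (P : Set Q) : Prop :=
  IsRightIdealSet S P ∧ P ≠ (S : Set Q) ∧
    ∀ a ∈ S, ∀ b ∈ S, (∀ p ∈ P, a * p ∈ P) → a * b ∈ P → a ∈ P ∨ b ∈ P

/-- The right `S`-submodule of `Q` generated by a set `G`. -/
def rightSpan (S : Subring Q) (G : Set Q) : Set Q :=
  ⋂₀ {J : Set Q | IsRightModSet S J ∧ G ⊆ J}

/-- The left `S`-submodule of `Q` generated by a set `G`. -/
def leftSpan (S : Subring Q) (G : Set Q) : Set Q :=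
  ⋂₀ {J : Set Q | IsLeftModSet S J ∧ G ⊆ J}

/-- `I` is a finitely generated right `S`-submodule of `Q`. -/
def IsFGRightModSet (S : Subring Q) (I : Set Q) : Prop :=
  ∃ G : Finset Q, I = rightSpan S ↑G

/-- The ascending chain condition on regular integral right divisorial ideals of `S`. -/
def ACCRightDivisorial (S : Subring Q) : Prop :=
  ∀ f : ℕ → Set Q,
    (∀ n, IsRightIdealSet S (f n) ∧ (∃ a ∈ f n, IsRegularElemIn S a) ∧ nuR S (f n) = f n) →
    (∀ n, f n ⊆ f (n + 1)) → ∃ N, ∀ n, N ≤ n → f n = f N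

/-- The ascending chain condition on regular integral left divisorial ideals of `S`. -/
def ACCLeftDivisorial (S : Subring Q) : Prop :=
  ∀ f : ℕ → Set Q,
    (∀ n, IsLeftIdealSet S (f n) ∧ (∃ a ∈ f n, IsRegularElemIn S a) ∧ nuL S (f n) = f n) →
    (∀ n, f n ⊆ f (n + 1)) → ∃ N, ∀ n, N ≤ n → f n = f N

/-- A right Mori order: an order satisfying the ACC on regular integral right
divisorial ideals. -/
def IsRightMori (S : Subring Q) : Prop := IsOrderIn S ∧ ACCRightDivisorial S

/-- The principal right ideal `aS` of `S`, as a subset of `Q`. -/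
def principalRight (S : Subring Q) (a : Q) : Set Q := {x : Q | ∃ s ∈ S, x = a * s}

/-- The principal left ideal `Sa` of `S`, as a subset of `Q`. -/
def principalLeft (S : Subring Q) (a : Q) : Set Q := {x : Q | ∃ s ∈ S, x = s * a}

/-- A two-sided (integral) ideal of `S`, as a subset of `Q`. -/
def IsTwoSidedIdealSet (S : Subring Q) (I : Set Q) : Prop :=
  IsRightModSet S I ∧ IsLeftModSet S I ∧ I ⊆ (S : Set Q)

/-- A maximal (proper) right ideal of `S`. -/
def IsMaxRightIdeal (S : Subring Q) (M : Set Q) : Prop :=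
  IsRightIdealSet S M ∧ M ≠ (S : Set Q) ∧
    ∀ N, IsRightIdealSet S N → N ≠ (S : Set Q) → M ⊆ N → N = M

/-- A maximal (proper) left ideal of `S`. -/
def IsMaxLeftIdeal (S : Subring Q) (M : Set Q) : Prop :=
  IsLeftIdealSet S M ∧ M ≠ (S : Set Q) ∧
    ∀ N, IsLeftIdealSet S N → N ≠ (S : Set Q) → M ⊆ N → N = M

/-- `S` is local with (Jacobson radical) `M`: `M` is a two-sided ideal which is the
only maximal right ideal and the only maximal left ideal of `S`. -/
def IsLocalWithMax (S : Subring Q) (M : Set Q) : Prop :=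
  IsTwoSidedIdealSet S M ∧
    IsMaxRightIdeal S M ∧ (∀ N, IsMaxRightIdeal S N → N = M) ∧
    IsMaxLeftIdeal S M ∧ (∀ N, IsMaxLeftIdeal S N → N = M)

/-- A local order. -/
def IsLocalOrder (S : Subring Q) : Prop := IsOrderIn S ∧ ∃ M : Set Q, IsLocalWithMax S M

/-- The additive span of the set of products `a * b` with `a ∈ A`, `b ∈ B`. -/
def mulSpan (A B : Set Q) : Set Q :=
  (AddSubgroup.closure {x : Q | ∃ a ∈ A, ∃ b ∈ B, x = a * b} : AddSubgroup Q)

/-- Powers `M^n` of an ideal `M` of `S` (with `M^0 = S`). -/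
def idealPow (S : Subring Q) (M : Set Q) : ℕ → Set Q
  | 0 => (S : Set Q)
  | n + 1 => mulSpan M (idealPow S M n)

/-- A right `τ`-ideal of `S`: a right ideal `J` such that `F^ν ⊆ J` for every finitely
generated right ideal `F ⊆ J`. -/
def IsRightTauIdeal (S : Subring Q) (J : Set Q) : Prop :=
  IsRightIdealSet S J ∧
    ∀ F : Set Q, IsRightIdealSet S F → IsFGRightModSet S F → F ⊆ J → nuR S F ⊆ J

/-- A maximal (proper) right `τ`-ideal of `S`. -/
def IsMaxRightTauIdeal (S : Subring Q) (M : Set Q) : Prop :=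
  IsRightTauIdeal S M ∧ M ≠ (S : Set Q) ∧
    ∀ N, IsRightTauIdeal S N → N ≠ (S : Set Q) → M ⊆ N → N = M

/-- A prime (two-sided) ideal of the order `S`. -/
def IsPrimeIdealSet (S : Subring Q) (P : Set Q) : Prop :=
  IsTwoSidedIdealSet S P ∧ P ≠ (S : Set Q) ∧
    ∀ a ∈ S, ∀ b ∈ S, (∀ s ∈ S, a * s * b ∈ P) → a ∈ P ∨ b ∈ P

/-- A divisorial two-sided (integral) ideal of `S`: `I = I^ν = ^ν I`. -/
def IsDivisorialIdealSet (S : Subring Q) (I : Set Q) : Prop :=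
  IsTwoSidedIdealSet S I ∧ nuR S I = I ∧ nuL S I = I

/-- `D_m(S)`: the set of maximal divisorial (two-sided, integral) ideals of `S`. -/
def maxDivisorialIdeals (S : Subring Q) : Set (Set Q) :=
  {P | IsDivisorialIdealSet S P ∧ P ≠ (S : Set Q) ∧
    ∀ J, IsDivisorialIdealSet S J → J ≠ (S : Set Q) → P ⊆ J → J = P}

/-- `c` is regular modulo the ideal `P` of `S`. -/
def IsRegularModP (S : Subring Q) (P : Set Q) (c : Q) : Prop :=
  c ∈ S ∧ (∀ b ∈ S, c * b ∈ P → b ∈ P) ∧ (∀ b ∈ S, b * c ∈ P → b ∈ P)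

/-- The left order `O_l(M) = {q ∈ Q : qM ⊆ M}` of `M`. -/
def leftOrderOf (M : Set Q) : Set Q := {q : Q | ∀ m ∈ M, q * m ∈ M}

/-- `s` is a unit of the subring `R` of `Q`. -/
def IsUnitIn (R : Subring Q) (s : Q) : Prop :=
  s ∈ R ∧ ∃ t ∈ R, s * t = 1 ∧ t * s = 1

/-- A family of overrings `S = ⋂ᵢ Sᵢ` is of finite character if every nonzero
non-unit of `S` is a non-unit of only finitely many `Sᵢ`. -/
def FiniteCharacter {α : Type*} (S : Subring Q) (F : α → Subring Q) : Prop :=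
  ∀ s ∈ S, s ≠ 0 → ¬IsUnitIn S s → {i : α | ¬IsUnitIn (F i) s}.Finite

/-- `S` is right pseudo-coherent: any (nonempty) finite intersection of principal
right ideals of `S` is a finitely generated right ideal. -/
def RightPseudoCoherent (S : Subring Q) : Prop :=
  ∀ F : Finset Q, ↑F ⊆ (S : Set Q) → F.Nonempty →
    IsFGRightModSet S (⋂ a ∈ F, principalRight S a)

/-- `A :_r x = {s ∈ S : x s ∈ A}`. -/
def colonByElemR (S : Subring Q) (A : Set Q) (x : Q) : Set Q :=
  {s : Q | s ∈ S ∧ x * s ∈ A}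

/-- A `ν`-irreducible right ideal: a right divisorial right ideal which is not the
intersection of two right divisorial right ideals properly containing it. -/
def IsNuIrreducible (S : Subring Q) (I : Set Q) : Prop :=
  IsRightIdealSet S I ∧ nuR S I = I ∧
    ¬∃ A B : Set Q, (IsRightIdealSet S A ∧ nuR S A = A) ∧
      (IsRightIdealSet S B ∧ nuR S B = B) ∧ I ⊂ A ∧ I ⊂ B ∧ I = A ∩ B

/-- A non-commutative (rank one) discrete valuation ring inside `Q`. -/
def IsNCDVR (R : Subring Q) : Prop :=
  IsOrderIn R ∧ ∃ M : Set Q, IsLocalWithMax R M ∧ M ≠ ({0} : Set Q) ∧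
    (∃ p : Q, IsRegularElemIn R p ∧ M = principalRight R p ∧ M = principalLeft R p) ∧
    (⋂ n : ℕ, idealPow R M n) = ({0} : Set Q)

/-- A Krull order in the sense of Marubayashi. -/
def IsKrullOrder (S : Subring Q) : Prop :=
  ∃ (A : Set (Subring Q)) (B : Finset (Subring Q)),
    (∀ R ∈ A, (S : Set Q) ⊆ ↑R ∧ IsNCDVR R) ∧
    (∀ T ∈ B, (S : Set Q) ⊆ ↑T ∧ IsSimpleRing T ∧ IsNoetherianRing T) ∧
    ((S : Set Q) = (⋂ R ∈ A, (R : Set Q)) ∩ ⋂ T ∈ B, (T : Set Q)) ∧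
    ∀ c : Q, IsRegularElemIn S c →
      {R ∈ A | principalRight R c ≠ (R : Set Q)}.Finite ∧
      {R ∈ A | principalLeft R c ≠ (R : Set Q)}.Finite

end Preamble

/-! The Mori condition extends from regular to all right divisorial right ideals. The right
ideals of the semisimple ring `Q` generated by an ascending chain of such ideals stabilise at
some `eQ` with `e` idempotent; adjoining `S ∩ (1 - e)Q` turns the chain into one of regular
divisorial ideals, from which it is recovered by intersecting with `eQ`. Noetherian induction
then splits every right divisorial ideal that is not `ν`-irreducible into two larger ones.

For the second part, every coset `c + S` of `Q` contains a unit: minimise the left annihilator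
of `a + s b` over `s ∈ S`, using that `S` is prime. If `q` lies in the cover of `I` but not in
`I = I^ν`, some `c` with `cI ⊆ S` has `cq ∉ S`, and `c` may be taken to be a unit. Then
`S :_r c` is a right divisorial ideal containing `I` but not the cover, so it equals `I`, and
writing `c = a⁻¹ b` gives `I = aS :_r b`. -/

section

variable {Q : Type*} [Ring Q] {S : Subring Q}

namespace IsRegularElemIn

theorem of_isUnit {a : Q} (ha : a ∈ S) (hu : IsUnit a) : IsRegularElemIn S a :=
  ⟨ha, fun _ _ h => hu.mul_left_cancel (h.trans (mul_zero a).symm),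
    fun _ _ h => hu.mul_right_cancel (h.trans (zero_mul a).symm)⟩

theorem one : IsRegularElemIn S (1 : Q) := of_isUnit S.one_mem isUnit_one

end IsRegularElemIn

namespace IsOrderIn

variable (hS : IsOrderIn S)
include hS

theorem isRegularElemIn_mul {a b : Q} (ha : IsRegularElemIn S a) (hb : IsRegularElemIn S b) :
    IsRegularElemIn S (a * b) :=
  .of_isUnit (S.mul_mem ha.1 hb.1) ((hS.1 a ha).mul (hS.1 b hb))

theorem exists_common_right_multiple {d₁ d₂ : Q} (h₁ : IsRegularElemIn S d₁)
    (h₂ : IsRegularElemIn S d₂) :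
    ∃ d, IsRegularElemIn S d ∧ (∃ s ∈ S, d = d₁ * s) ∧ ∃ s ∈ S, d = d₂ * s := by
  obtain ⟨u, rfl⟩ := hS.1 d₁ h₁
  obtain ⟨a, b, haS, hb, hab⟩ := hS.2.2 (↑u⁻¹ * d₂)
  refine ⟨d₂ * b, hS.isRegularElemIn_mul h₂ hb, ⟨a, haS, ?_⟩, b, hb.1, rfl⟩
  rw [← hab, ← mul_assoc, ← mul_assoc, Units.mul_inv, one_mul]

theorem exists_common_left_multiple {e₁ e₂ : Q} (h₁ : IsRegularElemIn S e₁)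
    (h₂ : IsRegularElemIn S e₂) :
    ∃ e, IsRegularElemIn S e ∧ (∃ s ∈ S, e = s * e₁) ∧ ∃ s ∈ S, e = s * e₂ := by
  obtain ⟨u, rfl⟩ := hS.1 e₁ h₁
  obtain ⟨a, b, haS, hb, hab⟩ := hS.2.1 (e₂ * ↑u⁻¹)
  refine ⟨b * e₂, hS.isRegularElemIn_mul hb h₂, ⟨a, haS, ?_⟩, b, hb.1, rfl⟩
  rw [← hab, mul_assoc, mul_assoc, Units.inv_mul, mul_one]

theorem exists_mul_mem_ne_zero {y : Q} (hy : y ≠ 0) :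
    ∃ b, IsRegularElemIn S b ∧ b * y ∈ S ∧ b * y ≠ 0 := by
  obtain ⟨a, b, haS, hb, hab⟩ := hS.2.1 y
  exact ⟨b, hb, hab ▸ haS, fun h => hy ((hS.1 b hb).mul_left_cancel (h.trans (mul_zero b).symm))⟩

theorem exists_mul_mul_ne_zero [IsSimpleRing Q] {x y : Q} (hx : x ≠ 0) (hy : y ≠ 0) :
    ∃ s ∈ S, x * s * y ≠ 0 := by
  by_contra! hxy
  have scale : ∀ {e d w : Q}, (∀ s ∈ S, x * s * (e * w * d) = 0) →
      ∀ s' ∈ S, ∀ t' ∈ S, ∀ s ∈ S, x * s * (s' * e * w * (d * t')) = 0 := by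
    intro e d w h s' hs' t' ht' s hs
    calc x * s * (s' * e * w * (d * t')) = x * (s * s') * (e * w * d) * t' := by noncomm_ring
      _ = 0 := by rw [h _ (S.mul_mem hs hs'), zero_mul]
  -- `x S` kills `S y S`, and regular elements on both sides move every element of the
  -- ideal `QyQ = Q` into the additive span of `S y S`
  have clear : ∀ w ∈ TwoSidedIdeal.span {y}, ∃ e d, IsRegularElemIn S e ∧
      IsRegularElemIn S d ∧ ∀ s ∈ S, x * s * (e * w * d) = 0 := by
    intro w hw
    rw [TwoSidedIdeal.mem_span_iff_mem_addSubgroup_closure] at hw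
    induction hw using AddSubgroup.closure_induction with
    | mem w hw =>
      obtain ⟨_, ⟨q, -, y', hy', rfl⟩, q', -, rfl⟩ := hw
      obtain ⟨a, b, haS, hb, hab⟩ := hS.2.1 q
      obtain ⟨a', b', ha'S, hb', hab'⟩ := hS.2.2 q'
      refine ⟨b, b', hb, hb', fun s hs => ?_⟩
      rw [Set.mem_singleton_iff.mp hy']
      calc x * s * (b * (q * y * q') * b') = x * (s * (b * q)) * y * (q' * b') := by
            noncomm_ring
        _ = 0 := by rw [hab, hxy _ (S.mul_mem hs haS), zero_mul]
    | zero => exact ⟨1, 1, .one, .one, fun s _ => by simp⟩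
    | add w₁ w₂ _ _ ih₁ ih₂ =>
      obtain ⟨e₁, d₁, he₁, hd₁, h₁⟩ := ih₁
      obtain ⟨e₂, d₂, he₂, hd₂, h₂⟩ := ih₂
      obtain ⟨e, he, ⟨s₁, hs₁, he₁'⟩, s₂, hs₂, he₂'⟩ := hS.exists_common_left_multiple he₁ he₂
      obtain ⟨d, hd, ⟨t₁, ht₁, hd₁'⟩, t₂, ht₂, hd₂'⟩ := hS.exists_common_right_multiple hd₁ hd₂
      refine ⟨e, d, he, hd, fun s hs => ?_⟩
      have k₁ := scale h₁ s₁ hs₁ t₁ ht₁ s hs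
      have k₂ := scale h₂ s₂ hs₂ t₂ ht₂ s hs
      rw [← he₁', ← hd₁'] at k₁
      rw [← he₂', ← hd₂'] at k₂
      rw [mul_add, add_mul, mul_add, k₁, k₂, add_zero]
    | neg w _ ih =>
      obtain ⟨e, d, he, hd, h⟩ := ih
      exact ⟨e, d, he, hd, fun s hs => by rw [mul_neg, neg_mul, mul_neg, h s hs, neg_zero]⟩
  have hspan : TwoSidedIdeal.span {y} = ⊤ := (eq_bot_or_eq_top _).resolve_left fun h =>
    hy (by simpa [h] using TwoSidedIdeal.subset_span (Set.mem_singleton y))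
  obtain ⟨e, d, he, hd, h⟩ := clear 1 (hspan ▸ TwoSidedIdeal.mem_top ..)
  have hxed : x * (e * d) = 0 := by simpa [mul_assoc] using h 1 S.one_mem
  exact hx ((hS.1 _ (hS.isRegularElemIn_mul he hd)).mul_right_cancel (hxed.trans (zero_mul _).symm))

end IsOrderIn

section SimpleArtinian

variable [IsSimpleRing Q] [IsArtinianRing Q]

namespace IsOrderIn

variable (hS : IsOrderIn S)
include hS

open LinearMap in
theorem exists_ker_toSpanSingleton_lt {u b : Q} (hb : IsRegularElemIn S b) (hu : ¬IsUnit u) :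
    ∃ x ∈ S, ker (toSpanSingleton Q Q (u + x * b)) < ker (toSpanSingleton Q Q u) := by
  obtain ⟨y, hyu, hy⟩ : ∃ y, y * u = 0 ∧ y ≠ 0 := by
    simpa [IsArtinianRing.isUnit_iff_isRightRegular, isRightRegular_iff_left_eq_zero_of_mul]
      using hu
  have hQu : Submodule.span Q {u} ≠ ⊤ := fun htop => hu <| by
    obtain ⟨v, hv⟩ := Submodule.mem_span_singleton.mp (htop ▸ Submodule.mem_top : (1 : Q) ∈ _)
    exact ⟨⟨u, v, mul_eq_one_symm hv, hv⟩, rfl⟩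
  obtain ⟨N, hN⟩ := exists_isCompl (Submodule.span Q {u})
  have hN0 : N ≠ ⊥ := fun h => hQu (by rw [← hN.sup_eq_top, h, sup_bot_eq])
  obtain ⟨g, hgN, hg⟩ := Submodule.exists_mem_ne_zero_of_ne_bot hN0
  obtain ⟨ub, rfl⟩ := hS.1 b hb
  obtain ⟨b₁, -, ha₁S, ha₁⟩ := hS.exists_mul_mem_ne_zero hy
  obtain ⟨b₂, -, ha₂S, ha₂⟩ :=
    hS.exists_mul_mem_ne_zero ((Units.mul_left_eq_zero ub⁻¹).not.mpr hg)
  obtain ⟨s, hs, hne⟩ := hS.exists_mul_mul_ne_zero ha₁ ha₂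
  have hx : s * (b₂ * (g * ↑ub⁻¹)) * ↑ub = (s * b₂) * g := by
    rw [mul_assoc, mul_assoc, mul_assoc, Units.inv_mul, mul_one, mul_assoc]
  -- `x b` lies in a complement `N` of `Qu`, so `lann (u + x b) ⊆ lann u`, while `a₁ ∈ lann u`
  -- does not kill `x b` by the choice of `s`
  refine ⟨s * (b₂ * (g * ↑ub⁻¹)), S.mul_mem hs ha₂S, lt_of_le_of_ne (fun z hz => ?_) fun h => ?_⟩
  · simp only [mem_ker, toSpanSingleton_apply, smul_eq_mul, mul_add, hx] at hz ⊢
    have hzu : z * u ∈ Submodule.span Q {u} ⊓ N := by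
      refine ⟨Submodule.smul_mem _ z (Submodule.mem_span_singleton_self u), ?_⟩
      rw [eq_neg_of_add_eq_zero_left hz, ← mul_assoc]
      exact N.neg_mem (N.smul_mem _ hgN)
    simpa [hN.inf_eq_bot] using hzu
  · have hmem : b₁ * y ∈ ker (toSpanSingleton Q Q u) := by
      simp [mul_assoc, hyu]
    rw [← h] at hmem
    simp only [mem_ker, toSpanSingleton_apply, smul_eq_mul, mul_add, hx] at hmem
    apply hne
    calc b₁ * y * s * (b₂ * (g * ↑ub⁻¹)) = (b₁ * y * u + b₁ * y * (s * b₂ * g)) * ↑ub⁻¹ := by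
          simp only [mul_assoc, hyu, mul_zero, zero_add]
      _ = 0 := by rw [hmem, zero_mul]

open LinearMap in
theorem exists_add_mul_isUnit (a : Q) {b : Q} (hb : IsRegularElemIn S b) :
    ∃ s ∈ S, IsUnit (a + s * b) := by
  obtain ⟨_, ⟨s₀, hs₀, rfl⟩, hmin⟩ := (wellFounded_lt (α := Submodule Q Q)).has_min
    ((fun s => ker (toSpanSingleton Q Q (a + s * b))) '' S) ⟨_, 0, S.zero_mem, rfl⟩
  refine ⟨s₀, hs₀, by_contra fun hu => ?_⟩
  obtain ⟨x, hx, hlt⟩ := hS.exists_ker_toSpanSingleton_lt hb hu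
  refine hmin _ ⟨s₀ + x, S.add_mem hs₀ hx, ?_⟩ hlt
  simp only [add_mul, add_assoc]

theorem exists_add_isUnit (c : Q) : ∃ t ∈ S, IsUnit (c + t) := by
  obtain ⟨a, b, -, hb, hcb⟩ := hS.2.2 c
  obtain ⟨t, ht, hu⟩ := hS.exists_add_mul_isUnit a hb
  obtain ⟨ub, rfl⟩ := hS.1 b hb
  have hct : c + t = (a + t * ub) * ↑ub⁻¹ := by
    rw [← hcb, ← add_mul, mul_assoc, Units.mul_inv, mul_one]
  exact ⟨t, ht, hct ▸ hu.mul ub⁻¹.isUnit⟩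

end IsOrderIn

end SimpleArtinian

def IsRightDivisorial (S : Subring Q) (I : Set Q) : Prop :=
  IsRightIdealSet S I ∧ nuR S I = I

theorem subset_nuR (I : Set Q) : I ⊆ nuR S I := fun _ hx _ hq => hq _ hx

theorem nuR_mono {I J : Set Q} (h : I ⊆ J) : nuR S I ⊆ nuR S J :=
  fun _ hz q hq => hz q fun b hb => hq b (h hb)

theorem nuR_nuR (I : Set Q) : nuR S (nuR S I) = nuR S I :=
  (subset_nuR _).antisymm' fun _ hz q hq => hz q fun _ hb => hb q hq

theorem isRightIdealSet_nuR {I : Set Q} (hI : I ⊆ S) : IsRightIdealSet S (nuR S I) := by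
  refine ⟨⟨fun b _ => by simp, fun x hx y hy b hb => ?_, fun x hx b hb => ?_,
    fun x hx s hs b hb => ?_⟩, fun z hz => ?_⟩
  · rw [mul_add]; exact S.add_mem (hx b hb) (hy b hb)
  · rw [mul_neg]; exact S.neg_mem (hx b hb)
  · rw [← mul_assoc]; exact S.mul_mem (hx b hb) hs
  · simpa using hz 1 fun b hb => by simpa using hI hb

theorem IsRightDivisorial.inter {A B : Set Q} (hA : IsRightDivisorial S A)
    (hB : IsRightDivisorial S B) : IsRightDivisorial S (A ∩ B) := by
  obtain ⟨⟨⟨hA0, hAadd, hAneg, hAmul⟩, hAS⟩, hAν⟩ := hA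
  obtain ⟨⟨⟨hB0, hBadd, hBneg, hBmul⟩, -⟩, hBν⟩ := hB
  refine ⟨⟨⟨⟨hA0, hB0⟩, fun x hx y hy => ⟨hAadd x hx.1 y hy.1, hBadd x hx.2 y hy.2⟩,
    fun x hx => ⟨hAneg x hx.1, hBneg x hx.2⟩,
    fun x hx s hs => ⟨hAmul x hx.1 s hs, hBmul x hx.2 s hs⟩⟩, fun x hx => hAS hx.1⟩, ?_⟩
  refine (subset_nuR _).antisymm' fun z hz => ⟨?_, ?_⟩
  · exact hAν ▸ nuR_mono Set.inter_subset_left hz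
  · exact hBν ▸ nuR_mono Set.inter_subset_right hz

theorem isRightDivisorial_colonByElemR (c : Q) : IsRightDivisorial S (colonByElemR S S c) := by
  refine ⟨⟨⟨⟨S.zero_mem, by simp⟩, fun x hx y hy => ⟨S.add_mem hx.1 hy.1, ?_⟩,
    fun x hx => ⟨S.neg_mem hx.1, by simpa using hx.2⟩,
    fun x hx s hs => ⟨S.mul_mem hx.1 hs, by simpa [mul_assoc] using S.mul_mem hx.2 hs⟩⟩,
    fun x hx => hx.1⟩, (subset_nuR _).antisymm' fun z hz => ⟨?_, hz c fun b hb => hb.2⟩⟩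
  · rw [mul_add]; exact S.add_mem hx.2 hy.2
  · simpa using hz 1 fun b hb => by simpa using hb.1

instance isNoetherian_mulOpposite_self [IsNoetherianRing Qᵐᵒᵖ] : IsNoetherian Qᵐᵒᵖ Q :=
  isNoetherian_of_surjective (LinearMap.toSpanSingleton Qᵐᵒᵖ Q 1)
    (LinearMap.range_eq_top.mpr fun x => ⟨MulOpposite.op x, by simp⟩)

theorem Submodule.exists_mem_forall_mul_eq_self [IsSemisimpleModule Qᵐᵒᵖ Q]
    (N : Submodule Qᵐᵒᵖ Q) : ∃ e ∈ N, ∀ a ∈ N, e * a = a := by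
  obtain ⟨N', hN'⟩ := ComplementedLattice.exists_isCompl N
  obtain ⟨e, he, e', he', hee'⟩ := mem_sup.mp (hN'.sup_eq_top ▸ mem_top (x := (1 : Q)))
  refine ⟨e, he, fun a ha => ?_⟩
  have hdiff : a - e * a ∈ N ⊓ N' := by
    refine ⟨N.sub_mem ha (N.smul_mem (MulOpposite.op a) he), ?_⟩
    have : a - e * a = e' * a := by
      calc a - e * a = (e + e') * a - e * a := by rw [hee', one_mul]
        _ = e' * a := by noncomm_ring
    exact this ▸ N'.smul_mem (MulOpposite.op a) he'
  simpa [hN'.inf_eq_bot, sub_eq_zero, eq_comm] using hdiff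

namespace IsOrderIn

variable (hS : IsOrderIn S)
include hS

theorem exists_mul_mem_of_mem_span {X : Set Q} (hX : IsRightModSet S X) {z : Q}
    (hz : z ∈ Submodule.span Qᵐᵒᵖ X) : ∃ d, IsRegularElemIn S d ∧ z * d ∈ X := by
  induction hz using Submodule.span_induction with
  | mem x hx => exact ⟨1, .one, by rwa [mul_one]⟩
  | zero => exact ⟨1, .one, by rw [zero_mul]; exact hX.1⟩
  | add z₁ z₂ _ _ ih₁ ih₂ =>
    obtain ⟨d₁, hd₁, hz₁⟩ := ih₁
    obtain ⟨d₂, hd₂, hz₂⟩ := ih₂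
    obtain ⟨d, hd, ⟨t₁, ht₁, hdt₁⟩, t₂, ht₂, hdt₂⟩ := hS.exists_common_right_multiple hd₁ hd₂
    refine ⟨d, hd, ?_⟩
    have hsplit : (z₁ + z₂) * d = z₁ * d₁ * t₁ + z₂ * d₂ * t₂ := by
      rw [add_mul, mul_assoc, mul_assoc, ← hdt₁, ← hdt₂]
    exact hsplit ▸ hX.2.1 _ (hX.2.2.2 _ hz₁ _ ht₁) _ (hX.2.2.2 _ hz₂ _ ht₂)
  | smul r z _ ih =>
    obtain ⟨d, hd, hzd⟩ := ih
    obtain ⟨ud, rfl⟩ := hS.1 d hd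
    obtain ⟨a, b, haS, hb, hab⟩ := hS.2.2 (↑ud⁻¹ * r.unop)
    refine ⟨b, hb, ?_⟩
    have hsplit : (r • z) * b = z * ud * a := by
      rw [MulOpposite.smul_eq_mul_unop, ← hab]
      simp only [mul_assoc, Units.mul_inv_cancel_left]
    exact hsplit ▸ hX.2.2.2 _ hzd _ haS

theorem exists_regular_mem_nuR_union {X : Set Q} (hX : IsRightIdealSet S X) {e : Q}
    (he : e ∈ Submodule.span Qᵐᵒᵖ X) (hee : e * e = e) :
    ∃ d ∈ nuR S (X ∪ {k | k ∈ S ∧ e * k = 0}), IsRegularElemIn S d := by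
  obtain ⟨d₁, hd₁, hed₁⟩ := hS.exists_mul_mem_of_mem_span hX.1 he
  obtain ⟨a, b, haS, hb, hab⟩ := hS.2.2 ((1 - e) * d₁)
  have hν := isRightIdealSet_nuR (S := S) (Set.union_subset hX.2 fun k hk => hk.1 :
    X ∪ {k | k ∈ S ∧ e * k = 0} ⊆ S)
  have he_ker : e * ((1 - e) * d₁ * b) = 0 := by
    rw [← mul_assoc, ← mul_assoc, mul_sub, mul_one, hee, sub_self, zero_mul, zero_mul]
  have hsplit : d₁ * b = e * d₁ * b + (1 - e) * d₁ * b := by noncomm_ring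
  refine ⟨d₁ * b, hsplit ▸ hν.1.2.1 _ (subset_nuR _ (Or.inl (hX.1.2.2.2 _ hed₁ _ hb.1))) _
    (subset_nuR _ (Or.inr ⟨hab ▸ haS, he_ker⟩)), hS.isRegularElemIn_mul hd₁ hb⟩

end IsOrderIn

theorem nuR_union_inter_eq {X : Set Q} (hX : nuR S X = X) {e : Q} (he : ∀ a ∈ X, e * a = a) :
    nuR S (X ∪ {k | k ∈ S ∧ e * k = 0}) ∩ {z | e * z = z} = X := by
  refine subset_antisymm (fun z ⟨hz, hez⟩ => ?_) fun a ha => ⟨subset_nuR _ (Or.inl ha), he a ha⟩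
  rw [← hX]
  intro q hq
  have hqe : q * e ∈ colonL (S : Set Q) (X ∪ {k | k ∈ S ∧ e * k = 0}) := by
    rintro w (hw | ⟨-, hw⟩)
    · rw [mul_assoc, he w hw]; exact hq w hw
    · rw [mul_assoc, hw, mul_zero]; exact S.zero_mem
  simpa only [mul_assoc, show e * z = z from hez] using hz _ hqe

namespace IsRightMori

variable [IsSemisimpleRing Q] (hS : IsRightMori S)
include hS

theorem exists_forall_ge_eq {f : ℕ → Set Q} (hf : ∀ n, IsRightDivisorial S (f n))
    (hmono : Monotone f) : ∃ N, ∀ n, N ≤ n → f n = f N := by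
  obtain ⟨n₀, hn₀⟩ := WellFoundedGT.monotone_chain_condition
    (⟨fun n => Submodule.span Qᵐᵒᵖ (f n), fun _ _ h => Submodule.span_mono (hmono h)⟩ :
      ℕ →o Submodule Qᵐᵒᵖ Q)
  obtain ⟨e, heN, he⟩ := (Submodule.span Qᵐᵒᵖ (f n₀)).exists_mem_forall_mul_eq_self
  have hspan : ∀ n, n₀ ≤ n → Submodule.span Qᵐᵒᵖ (f n) = Submodule.span Qᵐᵒᵖ (f n₀) :=
    fun n hn => (hn₀ n hn).symm
  -- adjoining `S ∩ (1 - e)Q` makes the ideals regular without changing their trace on `eQ`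
  set K : Set Q := {k | k ∈ S ∧ e * k = 0}
  have hrec : ∀ n, n₀ ≤ n → nuR S (f n ∪ K) ∩ {z | e * z = z} = f n := fun n hn =>
    nuR_union_inter_eq (hf n).2 fun a ha => he a (hspan n hn ▸ Submodule.subset_span ha)
  obtain ⟨N, hN⟩ := hS.2 (fun i => nuR S (f (n₀ + i) ∪ K))
    (fun i => ⟨isRightIdealSet_nuR (Set.union_subset (hf _).1.2 fun _ hk => hk.1),
      hS.1.exists_regular_mem_nuR_union (hf _).1
        ((hspan _ (Nat.le_add_right _ _)).symm ▸ heN) (he e heN),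
      nuR_nuR _⟩)
    (fun i => nuR_mono (Set.union_subset_union_left _ (hmono (Nat.le_succ _))))
  refine ⟨n₀ + N, fun n hn => ?_⟩
  obtain ⟨i, rfl⟩ := Nat.exists_eq_add_of_le (le_trans (Nat.le_add_right n₀ N) hn)
  rw [← hrec _ (Nat.le_add_right _ _), hN i (by omega), hrec _ (Nat.le_add_right _ _)]

theorem wellFoundedGT : WellFoundedGT {I : Set Q // IsRightDivisorial S I} :=
  wellFoundedGT_iff_monotone_chain_condition.mpr fun f => by
    obtain ⟨N, hN⟩ := hS.exists_forall_ge_eq (fun n => (f n).2) fun _ _ h => f.mono h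
    exact ⟨N, fun m hm => Subtype.ext (hN m hm).symm⟩

end IsRightMori

def IsNuIrreducibleDecomposable (S : Subring Q) (I : Set Q) : Prop :=
  ∃ (n : ℕ) (J : Fin (n + 1) → Set Q), (∀ k, IsNuIrreducible S (J k)) ∧ I = ⋂ k, J k

theorem IsNuIrreducible.decomposable {I : Set Q} (h : IsNuIrreducible S I) :
    IsNuIrreducibleDecomposable S I :=
  ⟨0, fun _ => I, fun _ => h, (Set.iInter_const I).symm⟩

theorem IsNuIrreducibleDecomposable.inter {A B : Set Q} (hA : IsNuIrreducibleDecomposable S A)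
    (hB : IsNuIrreducibleDecomposable S B) : IsNuIrreducibleDecomposable S (A ∩ B) := by
  obtain ⟨n, J₁, hJ₁, rfl⟩ := hA
  obtain ⟨m, J₂, hJ₂, rfl⟩ := hB
  refine ⟨n + 1 + m, Fin.append (m := n + 1) (n := m + 1) J₁ J₂,
    (Fin.forall_fin_add (m := n + 1) (n := m + 1) _).mpr ⟨?_, ?_⟩, ?_⟩
  · simpa only [Fin.append_left] using hJ₁
  · simpa only [Fin.append_right] using hJ₂
  · ext x
    simp only [Set.mem_inter_iff, Set.mem_iInter]
    exact ((Fin.forall_fin_add (m := n + 1) (n := m + 1) _).trans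
      (by simp only [Fin.append_left, Fin.append_right])).symm

theorem IsRightMori.isNuIrreducibleDecomposable [IsSemisimpleRing Q] (hS : IsRightMori S)
    {I : Set Q} (hI : IsRightDivisorial S I) : IsNuIrreducibleDecomposable S I := by
  have := hS.wellFoundedGT
  suffices ∀ X : {I : Set Q // IsRightDivisorial S I}, IsNuIrreducibleDecomposable S X from
    this ⟨I, hI⟩
  intro X
  induction X using WellFoundedGT.induction with
  | _ X ih =>
    by_cases hX : IsNuIrreducible S X
    · exact hX.decomposable
    obtain ⟨A, B, hA, hB, hXA, hXB, hXAB⟩ : ∃ A B : Set Q, IsRightDivisorial S A ∧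
        IsRightDivisorial S B ∧ X.1 ⊂ A ∧ X.1 ⊂ B ∧ X.1 = A ∩ B := by
      by_contra h
      exact hX ⟨X.2.1, X.2.2, h⟩
    exact hXAB ▸ (ih ⟨A, hA⟩ hXA).inter (ih ⟨B, hB⟩ hXB)

theorem IsNuIrreducible.cover_subset_of_ssubset {I C D : Set Q} (hI : IsNuIrreducible S I)
    (hC : IsRightDivisorial S C) (hIC : I ⊂ C)
    (hmin : ∀ K, IsRightDivisorial S K → I ⊂ K → K ⊆ C → K = C)
    (hD : IsRightDivisorial S D) (hID : I ⊂ D) : C ⊆ D := by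
  rcases (Set.subset_inter hID.subset hIC.subset).eq_or_ssubset with h | h
  · exact (hI.2.2 ⟨D, C, hD, hC, hID, hIC, h⟩).elim
  · exact hmin _ (hD.inter hC) h Set.inter_subset_right ▸ Set.inter_subset_left

namespace IsOrderIn

variable (hS : IsOrderIn S)
include hS

theorem exists_isUnit_notMem_colonByElemR [IsSimpleRing Q] [IsArtinianRing Q] {I : Set Q}
    (hI : IsRightDivisorial S I) {q : Q} (hq : q ∈ S) (hqI : q ∉ I) :
    ∃ c, IsUnit c ∧ I ⊆ colonByElemR S S c ∧ q ∉ colonByElemR S S c := by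
  rw [← hI.2] at hqI
  obtain ⟨c₀, hc₀, hc₀q⟩ : ∃ c₀ ∈ colonL (S : Set Q) I, c₀ * q ∉ S := by
    simpa [nuR, colonR] using hqI
  obtain ⟨t, ht, hu⟩ := hS.exists_add_isUnit c₀
  refine ⟨c₀ + t, hu, fun a ha => ⟨hI.1.2 ha, ?_⟩, fun h => hc₀q ?_⟩
  · rw [add_mul]
    exact S.add_mem (hc₀ a ha) (S.mul_mem ht (hI.1.2 ha))
  · simpa [add_mul] using S.sub_mem h.2 (S.mul_mem ht hq)

theorem exists_colonByElemR_self_eq {c : Q} (hc : IsUnit c) :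
    ∃ a b, IsRegularElemIn S a ∧ IsRegularElemIn S b ∧
      colonByElemR S S c = colonByElemR S (principalRight S a) b := by
  obtain ⟨b, a, hbS, ha, hac⟩ := hS.2.1 c
  obtain ⟨ua, rfl⟩ := hS.1 a ha
  refine ⟨ua, b, ha, .of_isUnit hbS (hac ▸ ua.isUnit.mul hc), Set.ext fun s => ⟨?_, ?_⟩⟩
  · rintro ⟨hs, hcs⟩
    exact ⟨hs, c * s, hcs, by rw [← hac, mul_assoc]⟩
  · rintro ⟨hs, t, ht, hts⟩
    refine ⟨hs, ua.isUnit.mul_left_cancel (?_ : ↑ua * (c * s) = ua * t) ▸ ht⟩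
    rw [← mul_assoc, hac, hts]

end IsOrderIn

theorem IsNuIrreducible.exists_eq_colonByElemR [IsSimpleRing Q] [IsArtinianRing Q]
    (hS : IsOrderIn S) {I C : Set Q} (hI : IsNuIrreducible S I) (hC : IsRightDivisorial S C)
    (hIC : I ⊂ C) (hmin : ∀ K, IsRightDivisorial S K → I ⊂ K → K ⊆ C → K = C) :
    ∃ a b, IsRegularElemIn S a ∧ IsRegularElemIn S b ∧
      I = colonByElemR S (principalRight S a) b := by
  obtain ⟨q, hqC, hqI⟩ := Set.exists_of_ssubset hIC
  obtain ⟨c, hc, hIc, hqc⟩ :=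
    hS.exists_isUnit_notMem_colonByElemR ⟨hI.1, hI.2.1⟩ (hC.1.2 hqC) hqI
  -- `C` lies in every right divisorial ideal strictly above `I`, but not in `S :_r c`
  have hIeq : I = colonByElemR S S c := hIc.eq_or_ssubset.resolve_right fun hlt =>
    hqc (hI.cover_subset_of_ssubset hC hIC hmin (isRightDivisorial_colonByElemR c) hlt hqC)
  obtain ⟨a, b, ha, hb, hab⟩ := hS.exists_colonByElemR_self_eq hc
  exact ⟨a, b, ha, hb, hIeq.trans hab⟩

end

/-- Proposition 4.3. In a right Mori order `S`, every right
divisorial right ideal `I` is a finite intersection of `ν`-irreducible right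
divisorial right ideals, and every `ν`-irreducible right divisorial right ideal
admitting a cover has the form `aS :_r b` for some regular `a, b ∈ S`. -/
theorem rightDivisorial_finiteIntersection_nuIrreducible
    {Q : Type*} [Ring Q] [IsSimpleRing Q] [IsArtinianRing Q]
    (S : Subring Q) (hS : IsRightMori S) (I : Set Q)
    (hI : IsRightIdealSet S I) (hdiv : nuR S I = I) :
    (∃ (n : ℕ) (J : Fin (n + 1) → Set Q),
        (∀ k, IsNuIrreducible S (J k)) ∧ I = ⋂ k, J k) ∧
    (∀ I' : Set Q, IsNuIrreducible S I' →
      (∃ C : Set Q, (IsRightIdealSet S C ∧ nuR S C = C) ∧ I' ⊂ C ∧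
        ∀ K : Set Q, IsRightIdealSet S K → nuR S K = K → I' ⊂ K → K ⊆ C → K = C) →
      ∃ a b : Q, IsRegularElemIn S a ∧ IsRegularElemIn S b ∧
        I' = {s : Q | s ∈ S ∧ b * s ∈ principalRight S a}) :=
  ⟨hS.isNuIrreducibleDecomposable ⟨hI, hdiv⟩, fun _ hI' ⟨_, hC, hI'C, hmin⟩ =>
    hI'.exists_eq_colonByElemR hS.1 hC hI'C fun K hK => hmin K hK.1 hK.2⟩
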